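/- Let K be a nonempty compact convex subset of ℝ^{n+1}. Then d_K is differentiable at every point x ∉ K, and Π_K(x) = x − d_K(x)·Dd_K(x), where Dd_K(x) is the gradient of d_K at x (a unit vector). -/

import Mathlib

open Metric Filter Topology RealInnerProductSpace

/-!
Let `p` be the nearest point of `K` to `x`, so that `x - p` lies in the normal cone of `K` at `p`,
and let `u = (x - p) / ‖x - p‖`. Then `y ↦ ⟪u, y - p⟫` is an affine minorant of `d_K`, while
`y ↦ ‖y - p‖` is a majorant; both agree with `d_K` at `x` and have derivative `⟪u, ·⟫` there,
so `d_K` is squeezed between them and has gradient `u` at `x`.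
-/

theorem HasFDerivAt.of_le_of_affine_le {E : Type*} [NormedAddCommGroup E] [NormedSpace ℝ E]
    {f g : E → ℝ} {L : E →L[ℝ] ℝ} {x : E} (hg : HasFDerivAt g L x) (hgx : g x = f x)
    (hfg : ∀ᶠ y in 𝓝 x, f y ≤ g y) (hLf : ∀ᶠ y in 𝓝 x, f x + L (y - x) ≤ f y) :
    HasFDerivAt f L x := by
  refine .of_isLittleO (Asymptotics.IsBigO.trans_isLittleO ?_ hg.isLittleO)
  refine .of_bound' (hfg.and hLf |>.mono fun y ⟨hle, hge⟩ => ?_)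
  rw [Real.norm_of_nonneg (by linarith), Real.norm_of_nonneg (by linarith)]
  linarith

section InnerProductSpace

variable {F : Type*} [NormedAddCommGroup F] [InnerProductSpace ℝ F]

theorem hasStrictFDerivAt_norm {v : F} (hv : v ≠ 0) :
    HasStrictFDerivAt (‖·‖) (innerSL ℝ (‖v‖⁻¹ • v)) v := by
  have hv' : ‖v‖ ≠ 0 := norm_ne_zero_iff.mpr hv
  have hsqrt := (hasStrictFDerivAt_norm_sq v).sqrt (pow_ne_zero 2 hv')
  simp only [Real.sqrt_sq (norm_nonneg _)] at hsqrt
  refine hsqrt.congr_fderiv ?_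
  rw [map_smul, two_smul, ← two_smul ℝ, smul_smul]
  congr 1
  field_simp

variable {K : Set F} {x p u : F}

theorem inner_sub_le_infDist (hp : p ∈ K) (hu : ‖u‖ ≤ 1) (hnormal : ∀ w ∈ K, ⟪u, w - p⟫ ≤ 0)
    (y : F) : ⟪u, y - p⟫ ≤ infDist y K := by
  refine (le_infDist ⟨p, hp⟩).2 fun w hw => ?_
  calc ⟪u, y - p⟫ = ⟪u, y - w⟫ + ⟪u, w - p⟫ := by rw [← inner_add_right, sub_add_sub_cancel]
    _ ≤ ‖u‖ * ‖y - w‖ + 0 := add_le_add (real_inner_le_norm _ _) (hnormal w hw)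
    _ ≤ dist y w := by
      rw [add_zero, dist_eq_norm]
      exact mul_le_of_le_one_left (norm_nonneg _) hu

theorem infDist_eq_norm_sub_of_forall_inner_le (hp : p ∈ K)
    (hnormal : ∀ w ∈ K, ⟪x - p, w - p⟫ ≤ 0) : infDist x K = ‖x - p‖ := by
  refine le_antisymm ((infDist_le_dist_of_mem hp).trans_eq (dist_eq_norm x p)) ?_
  refine (le_infDist ⟨p, hp⟩).2 fun w hw => ?_
  have hsq : ‖x - p‖ ^ 2 ≤ ‖x - w‖ ^ 2 := by
    have := norm_sub_sq_real (x - p) (w - p)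
    rw [sub_sub_sub_cancel_right] at this
    nlinarith [hnormal w hw, sq_nonneg ‖w - p‖]
  rw [dist_eq_norm]
  exact (pow_le_pow_iff_left₀ (norm_nonneg _) (norm_nonneg _) two_ne_zero).1 hsq

theorem hasGradientAt_infDist_of_forall_inner_le [CompleteSpace F] (hp : p ∈ K) (hxp : x ≠ p)
    (hnormal : ∀ w ∈ K, ⟪x - p, w - p⟫ ≤ 0) :
    HasGradientAt (infDist · K) (‖x - p‖⁻¹ • (x - p)) x := by
  set u := ‖x - p‖⁻¹ • (x - p)
  have hu : ‖u‖ = 1 := by simpa using norm_smul_inv_norm (𝕜 := ℝ) (sub_ne_zero.2 hxp)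
  have hux : ⟪u, x - p⟫ = ‖x - p‖ := by
    rw [real_inner_smul_left, real_inner_self_eq_norm_sq, inv_mul_eq_div, sq, mul_self_div_self]
  have hlow := inner_sub_le_infDist hp hu.le fun w hw => by
    rw [real_inner_smul_left]
    exact mul_nonpos_of_nonneg_of_nonpos (by positivity) (hnormal w hw)
  have hinf := infDist_eq_norm_sub_of_forall_inner_le hp hnormal
  have hdist : HasFDerivAt (fun y => ‖y - p‖) (innerSL ℝ u) x := by
    exact (hasStrictFDerivAt_norm (sub_ne_zero.2 hxp)).hasFDerivAt.comp x
      ((hasFDerivAt_id x).sub_const p)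
  refine hasGradientAt_iff_hasFDerivAt.2 (hdist.of_le_of_affine_le hinf.symm ?_ ?_)
  · exact .of_forall fun y => (infDist_le_dist_of_mem hp).trans_eq (dist_eq_norm y p)
  · refine .of_forall fun y => ?_
    calc infDist x K + ⟪u, y - x⟫ = ⟪u, y - p⟫ := by
          rw [hinf, ← hux, ← inner_add_right, sub_add_sub_cancel']
      _ ≤ infDist y K := hlow y

end InnerProductSpace

theorem stmt15 (n : ℕ) (K : Set (EuclideanSpace ℝ (Fin (n + 1)))) (hK : IsCompact K)
    (hKc : Convex ℝ K) (hKne : K.Nonempty)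
    (x : EuclideanSpace ℝ (Fin (n + 1))) (hx : x ∉ K) :
    ∃ g : EuclideanSpace ℝ (Fin (n + 1)), ‖g‖ = 1 ∧
      HasGradientAt (fun y => Metric.infDist y K) g x ∧
      (x - Metric.infDist x K • g) ∈ K ∧
      ∀ z ∈ K, dist x (x - Metric.infDist x K • g) ≤ dist x z := by
  obtain ⟨p, hpK, hp⟩ :=
    exists_norm_eq_iInf_of_complete_convex hKne hK.isClosed.isComplete hKc x
  have hnormal := (norm_eq_iInf_iff_real_inner_le_zero hKc hpK).1 hp
  have hxp : x - p ≠ 0 := sub_ne_zero.2 fun h => hx (h ▸ hpK)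
  have hinf := infDist_eq_norm_sub_of_forall_inner_le hpK hnormal
  have hproj : x - infDist x K • (‖x - p‖⁻¹ • (x - p)) = p := by
    rw [hinf, smul_inv_smul₀ (norm_ne_zero_iff.2 hxp), sub_sub_cancel]
  refine ⟨_, by simpa using norm_smul_inv_norm (𝕜 := ℝ) hxp,
    hasGradientAt_infDist_of_forall_inner_le hpK (sub_ne_zero.1 hxp) hnormal, ?_, ?_⟩
  · rwa [hproj]
  · intro z hz
    rw [hproj, dist_eq_norm, ← hinf]
    exact infDist_le_dist_of_mem hz
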